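/- Let θ=(k_r) be a lacunary sequence and f an unbounded modulus function that is not θ-compatible. Then there exists a sequence (B_k) of nonempty closed subsets of ℝ (with the usual metric) and B = {0} such that (B_k) is Wijsman θ-lacunary strong Cesàro convergent to B but not Wijsman θ-lacunary f-strong Cesàro convergent to B. Consequently, if every Wijsman θ-lacunary strong Cesàro convergent sequence of closed subsets of ℝ is Wijsman θ-lacunary f-strong Cesàro convergent to the same limit, then f is θ-compatible. -/

import Mathlib

open Filter Metric Set

/-- `f : ℝ → ℝ` is an (unbounded) modulus function (considered on `[0,∞)`):
`f x = 0 ↔ x = 0`, subadditive, increasing, continuous from the right at `0`,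
and unbounded. -/
def IsModulus (f : ℝ → ℝ) : Prop :=
  (∀ x ∈ Set.Ici (0:ℝ), 0 ≤ f x) ∧
  (∀ x ∈ Set.Ici (0:ℝ), (f x = 0 ↔ x = 0)) ∧
  (∀ x ∈ Set.Ici (0:ℝ), ∀ y ∈ Set.Ici (0:ℝ), f (x + y) ≤ f x + f y) ∧
  MonotoneOn f (Set.Ici (0:ℝ)) ∧
  ContinuousWithinAt f (Set.Ici (0:ℝ)) 0 ∧
  (∀ M : ℝ, ∃ x ∈ Set.Ici (0:ℝ), M < f x)

/-- `φ(ε) = limsup_n f(nε)/f(n)`. -/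
noncomputable def modPhi (f : ℝ → ℝ) (ε : ℝ) : ℝ :=
  Filter.limsup (fun n : ℕ => f ((n : ℝ) * ε) / f (n : ℝ)) Filter.atTop

/-- A modulus function is compatible if `φ(ε) → 0` as `ε → 0⁺`. -/
def Compatible (f : ℝ → ℝ) : Prop :=
  Filter.Tendsto (modPhi f) (nhdsWithin 0 (Set.Ioi 0)) (nhds 0)

/-- Wijsman statistical convergence of a sequence of subsets of a metric space. -/
def WijsmanStatConv {X : Type*} [MetricSpace X] (A : ℕ → Set X) (B : Set X) : Prop :=
  ∀ x : X, ∀ ε > (0:ℝ),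
    Filter.Tendsto (fun n : ℕ =>
      (((Finset.range n).filter
        (fun j => ε < |infDist x (A j) - infDist x B|)).card : ℝ) / (n : ℝ))
      Filter.atTop (nhds 0)

/-- Wijsman `f`-statistical convergence of a sequence of subsets of a metric space. -/
def WijsmanFStatConv {X : Type*} [MetricSpace X] (f : ℝ → ℝ) (A : ℕ → Set X)
    (B : Set X) : Prop :=
  ∀ x : X, ∀ ε > (0:ℝ),
    Filter.Tendsto (fun n : ℕ =>
      f ((((Finset.range n).filter
        (fun j => ε < |infDist x (A j) - infDist x B|)).card : ℝ)) / f (n : ℝ))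
      Filter.atTop (nhds 0)

/-- A real sequence is `f`-strong Cesàro convergent to `L`. -/
def FStrongCesaro (f : ℝ → ℝ) (x : ℕ → ℝ) (L : ℝ) : Prop :=
  Filter.Tendsto (fun n : ℕ =>
    f (∑ j ∈ Finset.range n, |x j - L|) / f (n : ℝ)) Filter.atTop (nhds 0)

/-- Wijsman `f`-strong Cesàro convergence. -/
def WijsmanFStrongCesaro {X : Type*} [MetricSpace X] (f : ℝ → ℝ) (A : ℕ → Set X)
    (B : Set X) : Prop :=
  ∀ x : X, FStrongCesaro f (fun j => infDist x (A j)) (infDist x B)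

/-- Wijsman strong Cesàro convergence (the case `f = id`). -/
def WijsmanStrongCesaro {X : Type*} [MetricSpace X] (A : ℕ → Set X) (B : Set X) : Prop :=
  ∀ x : X,
    Filter.Tendsto (fun n : ℕ =>
      (∑ j ∈ Finset.range n, |infDist x (A j) - infDist x B|) / (n : ℝ))
      Filter.atTop (nhds 0)

/-- A real sequence is uniformly integrable. -/
def UnifIntegrable (x : ℕ → ℝ) : Prop :=
  Filter.Tendsto (fun c : ℝ =>
    ⨆ n : ℕ, (∑ j ∈ Finset.range n, if c ≤ |x j| then |x j| else 0) / (n : ℝ))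
    Filter.atTop (nhds 0)

/-- Wijsman uniform integrability. -/
def WijsmanUnifIntegrable {X : Type*} [MetricSpace X] (A : ℕ → Set X) : Prop :=
  ∀ x : X, UnifIntegrable (fun j => infDist x (A j))

/-- A lacunary sequence: strictly increasing, starting at `0`,
with gaps `h_r = k_{r+1} - k_r → ∞`. -/
def IsLacunary (k : ℕ → ℕ) : Prop :=
  k 0 = 0 ∧ StrictMono k ∧
    Filter.Tendsto (fun r : ℕ => k (r + 1) - k r) Filter.atTop Filter.atTop

/-- The gaps `h_r` of a lacunary sequence. -/
def lacH (k : ℕ → ℕ) (r : ℕ) : ℕ := k (r + 1) - k r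

/-- The blocks `I_r = (k_r, k_{r+1}]` of a lacunary sequence. -/
def lacI (k : ℕ → ℕ) (r : ℕ) : Finset ℕ := Finset.Ioc (k r) (k (r + 1))

/-- `φ_θ(ε) = limsup_t f(h_t ε)/f(h_t)`. -/
noncomputable def modPhiTheta (f : ℝ → ℝ) (k : ℕ → ℕ) (ε : ℝ) : ℝ :=
  Filter.limsup (fun t : ℕ => f ((lacH k t : ℝ) * ε) / f ((lacH k t : ℝ))) Filter.atTop

/-- `f` is `θ`-compatible if `φ_θ(ε) → 0` as `ε → 0⁺`. -/
def ThetaCompatible (f : ℝ → ℝ) (k : ℕ → ℕ) : Prop :=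
  Filter.Tendsto (modPhiTheta f k) (nhdsWithin 0 (Set.Ioi 0)) (nhds 0)

/-- Wijsman `θ`-lacunary statistical convergence. -/
def WijsmanLacStatConv {X : Type*} [MetricSpace X] (k : ℕ → ℕ) (A : ℕ → Set X)
    (B : Set X) : Prop :=
  ∀ x : X, ∀ ε > (0:ℝ),
    Filter.Tendsto (fun r : ℕ =>
      (((lacI k r).filter
        (fun j => ε < |infDist x (A j) - infDist x B|)).card : ℝ) / (lacH k r : ℝ))
      Filter.atTop (nhds 0)

/-- Wijsman `θ`-lacunary `f`-statistical convergence. -/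
def WijsmanLacFStatConv {X : Type*} [MetricSpace X] (f : ℝ → ℝ) (k : ℕ → ℕ)
    (A : ℕ → Set X) (B : Set X) : Prop :=
  ∀ x : X, ∀ ε > (0:ℝ),
    Filter.Tendsto (fun r : ℕ =>
      f ((((lacI k r).filter
        (fun j => ε < |infDist x (A j) - infDist x B|)).card : ℝ)) / f ((lacH k r : ℝ)))
      Filter.atTop (nhds 0)

/-- Wijsman `θ`-lacunary `f`-strong Cesàro convergence. -/
def WijsmanLacFStrongCesaro {X : Type*} [MetricSpace X] (f : ℝ → ℝ) (k : ℕ → ℕ)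
    (A : ℕ → Set X) (B : Set X) : Prop :=
  ∀ x : X,
    Filter.Tendsto (fun r : ℕ =>
      f (∑ j ∈ lacI k r, |infDist x (A j) - infDist x B|) / f ((lacH k r : ℝ)))
      Filter.atTop (nhds 0)

/-- Wijsman `θ`-lacunary strong Cesàro convergence (the case `f = id`). -/
def WijsmanLacStrongCesaro {X : Type*} [MetricSpace X] (k : ℕ → ℕ)
    (A : ℕ → Set X) (B : Set X) : Prop :=
  ∀ x : X,
    Filter.Tendsto (fun r : ℕ =>
      (∑ j ∈ lacI k r, |infDist x (A j) - infDist x B|) / (lacH k r : ℝ))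
      Filter.atTop (nhds 0)

/-- A real sequence is `θ`-lacunary uniformly integrable. -/
def LacUnifIntegrable (k : ℕ → ℕ) (x : ℕ → ℝ) : Prop :=
  Filter.Tendsto (fun M : ℝ =>
    ⨆ t : ℕ, (∑ j ∈ lacI k t, if M ≤ |x j| then |x j| else 0) / (lacH k t : ℝ))
    Filter.atTop (nhds 0)

/-- Wijsman `θ`-lacunary uniform integrability. -/
def WijsmanLacUnifIntegrable {X : Type*} [MetricSpace X] (k : ℕ → ℕ)
    (A : ℕ → Set X) : Prop :=
  ∀ x : X, LacUnifIntegrable k (fun j => infDist x (A j))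

/-! As `φ_θ` is monotone and nonnegative on `(0,1]` but does not tend to `0`, there is `c > 0` with
`φ_θ(1/(m+1)) ≥ c` for every `m`, so we can pick blocks `t_0 < t_1 < …` with
`f(h_{t_m}/(m+1)) / f(h_{t_m}) > c/2`. The singletons `B_j = {1/(m+1)}` for `j ∈ I_{t_m}` (and `{0}`
off these blocks) have block averages `1/(m+1)` or `0`, which tend to `0`, while at `x = 0` the
`f`-averages along the blocks `I_{t_m}` stay above `c/2`. -/

open Topology

section Lacunary

variable {k : ℕ → ℕ}

lemma eq_of_mem_lacI_of_mem_lacI (hk : StrictMono k) {j r s : ℕ}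
    (hr : j ∈ lacI k r) (hs : j ∈ lacI k s) : r = s := by
  simp only [lacI, Finset.mem_Ioc] at hr hs
  by_contra hne
  rcases lt_or_gt_of_ne hne with h | h
  · exact (hr.2.trans (hk.monotone h)).not_gt hs.1
  · exact (hs.2.trans (hk.monotone h)).not_gt hr.1

lemma lacH_pos (hk : StrictMono k) (r : ℕ) : 0 < lacH k r :=
  Nat.sub_pos_of_lt (hk r.lt_succ_self)

lemma card_lacI (r : ℕ) : (lacI k r).card = lacH k r := by
  simp [lacI, lacH]

noncomputable def blockSeq {α : Type*} [Zero α] (k : ℕ → ℕ) (v : ℕ → α) (j : ℕ) : α :=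
  open Classical in if h : ∃ r, j ∈ lacI k r then v h.choose else 0

lemma blockSeq_of_mem_lacI {α : Type*} [Zero α] (hk : StrictMono k) (v : ℕ → α) {j r : ℕ}
    (hj : j ∈ lacI k r) : blockSeq k v j = v r := by
  have hex : ∃ r, j ∈ lacI k r := ⟨r, hj⟩
  rw [blockSeq, dif_pos hex, eq_of_mem_lacI_of_mem_lacI hk hex.choose_spec hj]

lemma sum_lacI_blockSeq {α M : Type*} [Zero α] [AddCommMonoid M] (hk : StrictMono k)
    (v : ℕ → α) (φ : α → M) (r : ℕ) :
    ∑ j ∈ lacI k r, φ (blockSeq k v j) = lacH k r • φ (v r) := by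
  rw [Finset.sum_congr rfl fun j hj => by rw [blockSeq_of_mem_lacI hk v hj],
    Finset.sum_const, card_lacI]

end Lacunary

lemma tendsto_extend_of_strictMono {α : Type*} [TopologicalSpace α] {g : ℕ → ℕ}
    (hg : StrictMono g) {e : ℕ → α} {b : α} (he : Tendsto e atTop (𝓝 b)) :
    Tendsto (Function.extend g e fun _ => b) atTop (𝓝 b) := by
  rw [Filter.tendsto_atTop'] at he ⊢
  intro s hs
  obtain ⟨M, hM⟩ := he s hs
  refine ⟨g M, fun r hr => ?_⟩
  by_cases hrg : ∃ m, g m = r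
  · obtain ⟨m, rfl⟩ := hrg
    rw [hg.injective.extend_apply]
    exact hM m (hg.le_iff_le.1 hr)
  · rw [Function.extend_apply' _ _ _ hrg]
    exact mem_of_mem_nhds hs

section Singletons

variable {E : Type*} [NormedAddCommGroup E] {k : ℕ → ℕ} {a : ℕ → E}

lemma wijsmanLacStrongCesaro_singleton_zero
    (ha : Tendsto (fun r => (∑ j ∈ lacI k r, ‖a j‖) / lacH k r) atTop (𝓝 0)) :
    WijsmanLacStrongCesaro k (fun j => {a j}) {0} := by
  intro x
  refine squeeze_zero (fun r => by positivity) (fun r => ?_) ha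
  gcongr with j
  simpa [infDist_singleton, dist_comm x] using abs_dist_sub_le (a j) 0 x

lemma WijsmanLacFStrongCesaro.tendsto_of_singleton_zero {f : ℝ → ℝ}
    (h : WijsmanLacFStrongCesaro f k (fun j => {a j}) {0}) :
    Tendsto (fun r => f (∑ j ∈ lacI k r, ‖a j‖) / f (lacH k r)) atTop (𝓝 0) := by
  simpa [infDist_singleton] using h 0

end Singletons

section ModPhiTheta

variable {f : ℝ → ℝ} {k : ℕ → ℕ}

lemma div_apply_mul_le_div_apply_mul (hf0 : ∀ x ∈ Ici (0:ℝ), 0 ≤ f x)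
    (hfm : MonotoneOn f (Ici 0)) {h ε ε' : ℝ} (hh : 0 ≤ h) (hε : 0 ≤ ε) (hεε' : ε ≤ ε') :
    f (h * ε) / f h ≤ f (h * ε') / f h := by
  have hle : h * ε ≤ h * ε' := mul_le_mul_of_nonneg_left hεε' hh
  exact div_le_div_of_nonneg_right
    (hfm (mul_nonneg hh hε) ((mul_nonneg hh hε).trans hle) hle) (hf0 h hh)

lemma isBoundedUnder_le_modPhiTheta_seq (hf0 : ∀ x ∈ Ici (0:ℝ), 0 ≤ f x)
    (hfm : MonotoneOn f (Ici 0)) {ε : ℝ} (hε : ε ∈ Icc (0:ℝ) 1) :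
    IsBoundedUnder (· ≤ ·) atTop fun t => f (lacH k t * ε) / f (lacH k t) := by
  refine isBoundedUnder_of ⟨1, fun t => ?_⟩
  refine (div_apply_mul_le_div_apply_mul hf0 hfm (Nat.cast_nonneg _) hε.1 hε.2).trans ?_
  rw [mul_one]
  exact div_self_le_one _

lemma isCoboundedUnder_le_modPhiTheta_seq (hf0 : ∀ x ∈ Ici (0:ℝ), 0 ≤ f x) {ε : ℝ}
    (hε : 0 ≤ ε) :
    IsCoboundedUnder (· ≤ ·) atTop fun t => f (lacH k t * ε) / f (lacH k t) :=
  isCoboundedUnder_le_of_le atTop fun t =>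
    div_nonneg (hf0 _ (mem_Ici.2 (by positivity))) (hf0 _ (mem_Ici.2 (Nat.cast_nonneg _)))

lemma modPhiTheta_nonneg (hf0 : ∀ x ∈ Ici (0:ℝ), 0 ≤ f x) (hfm : MonotoneOn f (Ici 0))
    {ε : ℝ} (hε : ε ∈ Icc (0:ℝ) 1) : 0 ≤ modPhiTheta f k ε :=
  le_limsup_of_frequently_le
    (Frequently.of_forall fun _ =>
      div_nonneg (hf0 _ (mem_Ici.2 (mul_nonneg (Nat.cast_nonneg _) hε.1)))
        (hf0 _ (mem_Ici.2 (Nat.cast_nonneg _))))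
    (isBoundedUnder_le_modPhiTheta_seq hf0 hfm hε)

lemma monotoneOn_modPhiTheta (hf0 : ∀ x ∈ Ici (0:ℝ), 0 ≤ f x) (hfm : MonotoneOn f (Ici 0)) :
    MonotoneOn (modPhiTheta f k) (Icc 0 1) := fun _ hε _ hε' hεε' =>
  limsup_le_limsup
    (Eventually.of_forall fun _ =>
      div_apply_mul_le_div_apply_mul hf0 hfm (Nat.cast_nonneg _) hε.1 hεε')
    (isCoboundedUnder_le_modPhiTheta_seq hf0 hε.1)
    (isBoundedUnder_le_modPhiTheta_seq hf0 hfm hε')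

lemma frequently_lt_of_lt_modPhiTheta (hf0 : ∀ x ∈ Ici (0:ℝ), 0 ≤ f x) {ε c : ℝ}
    (hε : 0 ≤ ε) (hc : c < modPhiTheta f k ε) :
    ∃ᶠ t in atTop, c < f (lacH k t * ε) / f (lacH k t) :=
  frequently_lt_of_lt_limsup (isCoboundedUnder_le_modPhiTheta_seq hf0 hε) hc

end ModPhiTheta

lemma exists_pos_forall_le_of_not_tendsto_nhdsGT_zero {φ : ℝ → ℝ}
    (hmono : MonotoneOn φ (Ioc 0 1)) (hnn : ∀ ε ∈ Ioc (0:ℝ) 1, 0 ≤ φ ε)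
    (h : ¬Tendsto φ (𝓝[>] 0) (𝓝 0)) : ∃ c > 0, ∀ ε ∈ Ioc (0:ℝ) 1, c ≤ φ ε := by
  by_contra! hsmall
  refine h (Metric.tendsto_nhds.2 fun δ hδ => ?_)
  obtain ⟨ε, hε, hφε⟩ := hsmall δ hδ
  filter_upwards [Ioo_mem_nhdsGT hε.1] with x hx
  have hx' : x ∈ Ioc 0 1 := ⟨hx.1, hx.2.le.trans hε.2⟩
  rw [Real.dist_0_eq_abs, abs_of_nonneg (hnn x hx')]
  exact (hmono hx' hε hx.2.le).trans_lt hφε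

theorem exists_wijsmanLacStrongCesaro_not_wijsmanLacFStrongCesaro {k : ℕ → ℕ}
    (hk : StrictMono k) {f : ℝ → ℝ} (hf0 : ∀ x ∈ Ici (0:ℝ), 0 ≤ f x)
    (hfm : MonotoneOn f (Ici 0)) (hnc : ¬ThetaCompatible f k) :
    ∃ B : ℕ → Set ℝ, (∀ n, (B n).Nonempty ∧ IsClosed (B n)) ∧
      WijsmanLacStrongCesaro k B {0} ∧ ¬WijsmanLacFStrongCesaro f k B {0} := by
  obtain ⟨c, hc, hcφ⟩ := exists_pos_forall_le_of_not_tendsto_nhdsGT_zero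
    ((monotoneOn_modPhiTheta hf0 hfm).mono Ioc_subset_Icc_self)
    (fun ε hε => modPhiTheta_nonneg hf0 hfm (Ioc_subset_Icc_self hε)) hnc
  have hε : ∀ m : ℕ, 1 / (m + 1 : ℝ) ∈ Ioc (0:ℝ) 1 := fun m =>
    ⟨by positivity, div_le_one_of_le₀ (by linarith [m.cast_nonneg (α := ℝ)]) (by positivity)⟩
  obtain ⟨g, hg, hgc⟩ := extraction_forall_of_frequently fun m =>
    frequently_lt_of_lt_modPhiTheta hf0 (hε m).1.le ((half_lt_self hc).trans_le (hcφ _ (hε m)))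
  set v : ℕ → ℝ := Function.extend g (fun m => 1 / (m + 1 : ℝ)) fun _ => 0
  have hsum : ∀ r, ∑ j ∈ lacI k r, ‖blockSeq k v j‖ = lacH k r * ‖v r‖ := fun r => by
    rw [sum_lacI_blockSeq hk, nsmul_eq_mul]
  refine ⟨fun j => {blockSeq k v j}, fun _ => ⟨singleton_nonempty _, isClosed_singleton⟩,
    wijsmanLacStrongCesaro_singleton_zero ?_, fun h => ?_⟩
  · have hv : Tendsto v atTop (𝓝 0) :=
      tendsto_extend_of_strictMono hg tendsto_one_div_add_atTop_nhds_zero_nat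
    refine (tendsto_norm_zero.comp hv).congr fun r => ?_
    rw [hsum, mul_div_cancel_left₀ _ (Nat.cast_ne_zero.2 (lacH_pos hk r).ne')]
    rfl
  · obtain ⟨m, hm⟩ := ((h.tendsto_of_singleton_zero.comp hg.tendsto_atTop).eventually
      (gt_mem_nhds (half_pos hc))).exists
    have hvg : ‖v (g m)‖ = 1 / (m + 1 : ℝ) := by
      rw [show v (g m) = 1 / (m + 1 : ℝ) from hg.injective.extend_apply _ _ m,
        Real.norm_of_nonneg (hε m).1.le]
    simp only [Function.comp_apply, hsum, hvg] at hm
    exact (hgc m).not_gt hm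

theorem exists_lac_cesaro_not_lac_fcesaro_of_not_thetaCompatible
    (k : ℕ → ℕ) (hk : IsLacunary k)
    (f : ℝ → ℝ) (hf : IsModulus f) (hnc : ¬ ThetaCompatible f k) :
    (∃ B : ℕ → Set ℝ, (∀ n, (B n).Nonempty ∧ IsClosed (B n)) ∧
      WijsmanLacStrongCesaro k B ({0} : Set ℝ) ∧
      ¬ WijsmanLacFStrongCesaro f k B ({0} : Set ℝ)) ∧
    ((∀ (C : ℕ → Set ℝ) (D : Set ℝ), (∀ n, (C n).Nonempty ∧ IsClosed (C n)) →
        D.Nonempty → IsClosed D → WijsmanLacStrongCesaro k C D →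
        WijsmanLacFStrongCesaro f k C D) →
      ThetaCompatible f k) := by
  obtain ⟨-, hkmono, -⟩ := hk
  obtain ⟨hf0, -, -, hfm, -, -⟩ := hf
  have hB := exists_wijsmanLacStrongCesaro_not_wijsmanLacFStrongCesaro hkmono hf0 hfm hnc
  refine ⟨hB, fun H => ?_⟩
  obtain ⟨B, hBc, hs, hns⟩ := hB
  exact (hns (H B {0} hBc (singleton_nonempty 0) isClosed_singleton hs)).elim
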